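/- In the setting of the Theorem — (Ω, F, P) a probability space, n ≥ 1, probability mass functions p_1, …, p_n on ℕ with H(p_t) < ∞, for each t an i.i.d. sequence R_t^1, R_t^2, … : Ω → ℕ with common law p_t, p̄ = (1/n) Σ_t p_t, empirical distributions P̂_t^m(r) = (1/m) #{k ≤ m : R_t^k = r} and P̂^m = (1/n) Σ_t P̂_t^m — the following holds for each fixed t with probability 1: lim_{m→∞} Σ_r −P̂_t^m(r) log P̂^m(r) = Σ_r −p_t(r) log p̄(r). -/

import Mathlib

/-!
By the strong law of large numbers, almost surely: every empirical frequency `P̂ₜᵐ(r)` tends to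
`pₜ(r)`; no sample ever lands where `p̄` vanishes; and the empirical mean
`∑ r, P̂ₜᵐ(r) (-log p̄(r))` of `-log p̄(Rₜᵏ)` tends to `∑ r, pₜ(r) (-log p̄(r))`, which is finite
because `p̄ ≥ pₜ / n` and `H(pₜ) < ∞`. Since `P̂ₜᵐ ≤ n P̂ᵐ`, the inequality `log y ≤ y` gives the
domination `-P̂ₜᵐ(r) log P̂ᵐ(r) ≤ P̂ₜᵐ(r) (-log p̄(r)) + n p̄(r)`, whose sums converge to the sum of
the pointwise limits. The generalized dominated convergence theorem for counting measure, which
follows from Fatou's lemma applied to `fₘ` and to `gₘ - fₘ`, then gives the claim.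
-/

open MeasureTheory ProbabilityTheory Filter Real Topology Finset

theorem neg_mul_log_le_of_le_mul {q Q b c : ℝ} (hq : 0 ≤ q) (hc : 0 ≤ c) (hqQ : q ≤ c * Q)
    (hb : 0 < b) : -q * log Q ≤ q * -log b + c * b := by
  rcases hq.eq_or_lt with rfl | hq
  · simpa using mul_nonneg hc hb.le
  have hQ : 0 < Q := pos_of_mul_pos_right (hq.trans_le hqQ) hc
  have hlog : log (b / Q) ≤ b / Q := (log_le_sub_one_of_pos (by positivity)).trans (by linarith)
  calc -q * log Q = q * -log b + q * log (b / Q) := by rw [log_div hb.ne' hQ.ne']; ring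
    _ ≤ q * -log b + q * (b / Q) := by gcongr
    _ = q * -log b + q / Q * b := by ring
    _ ≤ q * -log b + c * b := by gcongr; exact (div_le_iff₀ hQ).2 hqQ

theorem summable_mul_neg_log_of_le_mul {β : Type*} {a b : β → ℝ} {c : ℝ} (hc : 0 < c)
    (ha0 : ∀ r, 0 ≤ a r) (hab : ∀ r, a r ≤ c * b r) (hb1 : ∀ r, b r ≤ 1) (ha : Summable a)
    (hH : Summable fun r => -a r * log (a r)) : Summable fun r => a r * -log (b r) := by
  refine (hH.add (ha.mul_right (log c))).of_nonneg_of_le (fun r => ?_) (fun r => ?_) <;>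
    rcases (ha0 r).eq_or_lt with har | har <;> try simp [← har]
  all_goals have hbr : 0 < b r := pos_of_mul_pos_right (har.trans_le (hab r)) hc.le
  · exact mul_nonneg har.le (neg_nonneg.2 (log_nonpos hbr.le (hb1 r)))
  · have : log (a r) - log c ≤ log (b r) := by
      rw [← log_div har.ne' hc.ne']
      exact log_le_log (by positivity) ((div_le_iff₀' hc).2 (hab r))
    nlinarith

section TsumConvergence

variable {ι β : Type*} {l : Filter ι}

theorem eventually_lt_tsum_of_tendsto {f : ι → β → ℝ} {F : β → ℝ} (hf0 : ∀ i r, 0 ≤ f i r)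
    (hfs : ∀ i, Summable (f i)) (hF : Summable F) (hf : ∀ r, Tendsto (f · r) l (𝓝 (F r)))
    {a : ℝ} (ha : a < ∑' r, F r) : ∀ᶠ i in l, a < ∑' r, f i r := by
  obtain ⟨s, hs⟩ := (hF.hasSum.eventually (lt_mem_nhds ha)).exists
  filter_upwards [(tendsto_finsetSum s fun r _ => hf r).eventually (lt_mem_nhds hs)] with i hi
  exact hi.trans_le ((hfs i).sum_le_tsum s fun r _ => hf0 i r)

theorem tendsto_tsum_of_le_of_tendsto_tsum {f g : ι → β → ℝ} {F G : β → ℝ}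
    (hf0 : ∀ i r, 0 ≤ f i r) (hfg : ∀ i r, f i r ≤ g i r) (hgs : ∀ i, Summable (g i))
    (hG : Summable G) (hf : ∀ r, Tendsto (f · r) l (𝓝 (F r)))
    (hg : ∀ r, Tendsto (g · r) l (𝓝 (G r)))
    (hgG : Tendsto (fun i => ∑' r, g i r) l (𝓝 (∑' r, G r))) :
    Tendsto (fun i => ∑' r, f i r) l (𝓝 (∑' r, F r)) := by
  rcases l.eq_or_neBot with rfl | _
  · exact tendsto_bot
  have hfs i : Summable (f i) := (hgs i).of_nonneg_of_le (hf0 i) (hfg i)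
  have hF0 r : 0 ≤ F r := ge_of_tendsto' (hf r) fun i => hf0 i r
  have hFG r : F r ≤ G r := le_of_tendsto_of_tendsto' (hf r) (hg r) fun i => hfg i r
  have hF : Summable F := hG.of_nonneg_of_le hF0 hFG
  refine tendsto_order.2 ⟨fun a ha => eventually_lt_tsum_of_tendsto hf0 hfs hF hf ha, ?_⟩
  intro a ha
  -- Fatou's lemma for `g - f` bounds `∑' f = ∑' g - ∑' (g - f)` from above.
  have hGF : ∑' r, (G r - F r) = ∑' r, G r - ∑' r, F r := hG.tsum_sub hF
  obtain ⟨b, hGb, hb⟩ : ∃ b, ∑' r, G r - a < b ∧ b < ∑' r, (G r - F r) :=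
    exists_between (by linarith)
  filter_upwards [hgG.eventually (gt_mem_nhds (show ∑' r, G r < a + b by linarith)),
    eventually_lt_tsum_of_tendsto (fun i r => sub_nonneg.2 (hfg i r))
      (fun i => (hgs i).sub (hfs i)) (hG.sub hF) (fun r => (hg r).sub (hf r)) hb] with i hgi hgfi
  rw [(hgs i).tsum_sub (hfs i)] at hgfi
  linarith

theorem tendsto_tsum_neg_mul_log {q Q : ι → β → ℝ} {p b : β → ℝ} {c : ℝ} (hc : 0 ≤ c)
    (hq0 : ∀ i r, 0 ≤ q i r) (hQ0 : ∀ i r, 0 ≤ Q i r) (hQ1 : ∀ i r, Q i r ≤ 1)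
    (hqQ : ∀ i r, q i r ≤ c * Q i r) (hb0 : ∀ r, 0 ≤ b r) (hb : Summable b)
    (hqb : ∀ i r, b r = 0 → q i r = 0)
    (hq : ∀ r, Tendsto (q · r) l (𝓝 (p r))) (hQ : ∀ r, Tendsto (Q · r) l (𝓝 (b r)))
    (hqs : ∀ i, Summable fun r => q i r * -log (b r))
    (hps : Summable fun r => p r * -log (b r))
    (hlim : Tendsto (fun i => ∑' r, q i r * -log (b r)) l (𝓝 (∑' r, p r * -log (b r)))) :
    Tendsto (fun i => ∑' r, -q i r * log (Q i r)) l (𝓝 (∑' r, -p r * log (b r))) := by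
  have hcb : Summable fun r => c * b r := hb.mul_left c
  refine tendsto_tsum_of_le_of_tendsto_tsum (g := fun i r => q i r * -log (b r) + c * b r)
    (fun i r => ?_) (fun i r => ?_) (fun i => (hqs i).add hcb) (hps.add hcb) (fun r => ?_)
    (fun r => ((hq r).mul_const _).add_const _) ?_
  · rw [neg_mul, ← mul_neg]
    exact mul_nonneg (hq0 i r) (neg_nonneg.2 (log_nonpos (hQ0 i r) (hQ1 i r)))
  · rcases (hb0 r).eq_or_lt with hbr | hbr
    · simp [hqb i r hbr.symm, ← hbr]
    · exact neg_mul_log_le_of_le_mul (hq0 i r) hc (hqQ i r) hbr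
  · rcases (hb0 r).eq_or_lt with hbr | hbr
    · simpa [hqb _ r hbr.symm, ← hbr] using tendsto_const_nhds
    · exact (hq r).neg.mul ((continuousAt_log hbr.ne').tendsto.comp (hQ r))
  · simp only [(hqs _).tsum_add hcb, hps.tsum_add hcb]
    exact hlim.add_const _

end TsumConvergence

section Mean

variable {n : ℕ}

theorem le_mul_mean {x : Fin n → ℝ} (hx : ∀ i, 0 ≤ x i) (t : Fin n) :
    x t ≤ n * ((1 / n) * ∑ i, x i) := by
  rw [← mul_assoc, mul_one_div_cancel (Nat.cast_ne_zero.2 t.pos.ne'), one_mul]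
  exact single_le_sum (fun i _ => hx i) (mem_univ t)

theorem mean_le_one {x : Fin n → ℝ} (hx : ∀ i, x i ≤ 1) : (1 / n) * ∑ i, x i ≤ 1 := by
  calc (1 / n) * ∑ i, x i ≤ (1 / n) * ∑ _i : Fin n, (1 : ℝ) := by gcongr with i; exact hx i
    _ ≤ 1 := by simpa using inv_mul_le_one

end Mean

section Empirical

variable {α : Type*} [DecidableEq α]

noncomputable def empiricalFreq (x : ℕ → α) (m : ℕ) (r : α) : ℝ :=
  #{k ∈ range m | x k = r} / m

theorem empiricalFreq_nonneg (x : ℕ → α) (m : ℕ) (r : α) : 0 ≤ empiricalFreq x m r := by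
  unfold empiricalFreq; positivity

theorem empiricalFreq_le_one (x : ℕ → α) (m : ℕ) (r : α) : empiricalFreq x m r ≤ 1 := by
  refine div_le_one_of_le₀ ?_ m.cast_nonneg
  exact_mod_cast (card_filter_le _ _).trans (card_range m).le

theorem empiricalFreq_eq_zero {x : ℕ → α} {m : ℕ} {r : α} (hr : r ∉ (range m).image x) :
    empiricalFreq x m r = 0 := by
  have : {k ∈ range m | x k = r} = ∅ :=
    filter_eq_empty_iff.2 fun k hk hkr => hr (hkr ▸ mem_image_of_mem x hk)
  simp [empiricalFreq, this]

theorem summable_empiricalFreq_mul (x : ℕ → α) (m : ℕ) (f : α → ℝ) :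
    Summable fun r => empiricalFreq x m r * f r :=
  summable_of_ne_finset_zero (s := (range m).image x) fun r hr => by
    rw [empiricalFreq_eq_zero hr, zero_mul]

theorem tsum_empiricalFreq_mul (x : ℕ → α) (m : ℕ) (f : α → ℝ) :
    ∑' r, empiricalFreq x m r * f r = (∑ k ∈ range m, f (x k)) / m := by
  rw [tsum_eq_sum (s := (range m).image x) fun r hr => by rw [empiricalFreq_eq_zero hr, zero_mul],
    ← sum_fiberwise_of_maps_to (fun k hk => mem_image_of_mem x hk), sum_div]
  refine sum_congr rfl fun r _ => ?_
  rw [sum_congr rfl fun k hk => congrArg f (mem_filter.1 hk).2, sum_const, nsmul_eq_mul,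
    empiricalFreq]
  ring

end Empirical

section StrongLaw

variable {Ω α : Type*} [MeasurableSpace Ω] {μ : Measure Ω} [Countable α] {p : α → ℝ}

theorem ae_empiricalFreq_eq_zero [DecidableEq α] {X : ℕ → Ω → α}
    (hlaw : ∀ k r, μ {ω | X k ω = r} = ENNReal.ofReal (p r)) :
    ∀ᵐ ω ∂μ, ∀ m r, p r = 0 → empiricalFreq (X · ω) m r = 0 := by
  have hmiss : ∀ᵐ ω ∂μ, ∀ k r, p r = 0 → X k ω ≠ r := by
    refine ae_all_iff.2 fun k => ae_all_iff.2 fun r => ae_iff.2 ?_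
    by_cases hr : p r = 0 <;> simp [hr, hlaw]
  filter_upwards [hmiss] with ω hω m r hr
  exact empiricalFreq_eq_zero (by simpa using fun k _ => hω k r hr)

variable [MeasurableSpace α] [MeasurableSingletonClass α]

theorem map_eq_sum_smul_dirac {X : Ω → α} (hX : Measurable X)
    (hlaw : ∀ r, μ {ω | X ω = r} = ENNReal.ofReal (p r)) :
    μ.map X = Measure.sum fun r => ENNReal.ofReal (p r) • Measure.dirac r := by
  rw [← Measure.sum_smul_dirac (μ.map X)]
  congr with r : 1
  rw [Measure.map_apply hX (measurableSet_singleton r)]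
  exact congrArg (· • Measure.dirac r) (hlaw r)

variable [DecidableEq α] {X : ℕ → Ω → α}

theorem ae_tendsto_tsum_empiricalFreq_mul (hX : ∀ k, Measurable (X k))
    (hindep : Pairwise fun i j => IndepFun (X i) (X j) μ)
    (hlaw : ∀ k r, μ {ω | X k ω = r} = ENNReal.ofReal (p r)) (hp0 : ∀ r, 0 ≤ p r)
    {f : α → ℝ} (hf : Summable fun r => p r * f r) :
    ∀ᵐ ω ∂μ, Tendsto (fun m => ∑' r, empiricalFreq (X · ω) m r * f r) atTop
      (𝓝 (∑' r, p r * f r)) := by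
  have hmap k := map_eq_sum_smul_dirac (hX k) (hlaw k)
  have hf' : Summable fun r => (ENNReal.ofReal (p r)).toReal * ‖f r‖ :=
    hf.abs.congr fun r => by rw [abs_mul, abs_of_nonneg (hp0 r), ENNReal.toReal_ofReal (hp0 r),
      Real.norm_eq_abs]
  have hint : Integrable f (μ.map (X 0)) := by
    rw [hmap]; exact integrable_sum_dirac (fun _ => ENNReal.ofReal_ne_top) hf'
  have hmean : μ[fun ω => f (X 0 ω)] = ∑' r, p r * f r := by
    rw [← integral_map (hX 0).aemeasurable hint.aestronglyMeasurable, hmap,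
      integral_sum_dirac_eq_tsum (fun _ => ENNReal.ofReal_ne_top) hf']
    simp only [ENNReal.toReal_ofReal (hp0 _), smul_eq_mul]
  have hslln := strong_law_ae_real (fun k ω => f (X k ω)) (hint.comp_measurable (hX 0))
    (fun i j hij => (hindep hij).comp .of_discrete .of_discrete)
    (fun k => (IdentDistrib.mk (hX k).aemeasurable (hX 0).aemeasurable
      ((hmap k).trans (hmap 0).symm)).comp .of_discrete)
  filter_upwards [hslln] with ω hω
  simpa only [tsum_empiricalFreq_mul, hmean] using hω

theorem ae_tendsto_empiricalFreq (hX : ∀ k, Measurable (X k))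
    (hindep : Pairwise fun i j => IndepFun (X i) (X j) μ)
    (hlaw : ∀ k r, μ {ω | X k ω = r} = ENNReal.ofReal (p r)) (hp0 : ∀ r, 0 ≤ p r) (r : α) :
    ∀ᵐ ω ∂μ, Tendsto (fun m => empiricalFreq (X · ω) m r) atTop (𝓝 (p r)) := by
  have hsum : Summable fun r' => p r' * if r' = r then (1 : ℝ) else 0 :=
    summable_of_ne_finset_zero (s := {r}) fun r' hr' => by simp [mem_singleton.not.1 hr']
  simpa [mul_ite] using ae_tendsto_tsum_empiricalFreq_mul hX hindep hlaw hp0 hsum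

end StrongLaw

theorem tendsto_tsum_neg_mul_log_mean {ι β : Type*} {l : Filter ι} {n : ℕ}
    {q : Fin n → ι → β → ℝ} {p : Fin n → β → ℝ} (t : Fin n)
    (hq0 : ∀ t i r, 0 ≤ q t i r) (hq1 : ∀ t i r, q t i r ≤ 1) (hp0 : ∀ t r, 0 ≤ p t r)
    (hp : ∀ t, Summable (p t)) (hqp : ∀ t i r, p t r = 0 → q t i r = 0)
    (hq : ∀ t r, Tendsto (q t · r) l (𝓝 (p t r)))
    (hqs : ∀ i, Summable fun r => q t i r * -log ((1 / n) * ∑ t, p t r))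
    (hps : Summable fun r => p t r * -log ((1 / n) * ∑ t, p t r))
    (hlim : Tendsto (fun i => ∑' r, q t i r * -log ((1 / n) * ∑ t, p t r)) l
      (𝓝 (∑' r, p t r * -log ((1 / n) * ∑ t, p t r)))) :
    Tendsto (fun i => ∑' r, -q t i r * log ((1 / n) * ∑ t, q t i r)) l
      (𝓝 (∑' r, -p t r * log ((1 / n) * ∑ t, p t r))) := by
  refine tendsto_tsum_neg_mul_log n.cast_nonneg (hq0 t)
    (fun i r => mul_nonneg (by positivity) (sum_nonneg fun t _ => hq0 t i r))
    (fun i r => mean_le_one fun t => hq1 t i r) (fun i r => le_mul_mean (hq0 · i r) t)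
    (fun r => mul_nonneg (by positivity) (sum_nonneg fun t _ => hp0 t r))
    ((summable_sum fun t _ => hp t).mul_left _) (fun i r hr => hqp t i r ?_) (hq t)
    (fun r => (tendsto_finsetSum _ fun t _ => hq t r).const_mul _) hqs hps hlim
  exact le_antisymm ((le_mul_mean (hp0 · r) t).trans_eq (by rw [hr, mul_zero])) (hp0 t r)

theorem plugin_cross_entropy_converges_general
    {Ω : Type*} [MeasurableSpace Ω] (μ : Measure Ω)
    (n : ℕ) (p : Fin n → ℕ → ℝ)
    (hp0 : ∀ t r, 0 ≤ p t r) (hp1 : ∀ t, HasSum (p t) 1)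
    (hH : ∀ t, Summable (fun r => -(p t r) * log (p t r)))
    (R : Fin n → ℕ → Ω → ℕ) (hmeas : ∀ t k, Measurable (R t k))
    (hindep : ∀ t, iIndepFun (R t) μ)
    (hlaw : ∀ t k r, μ {ω | R t k ω = r} = ENNReal.ofReal (p t r))
    (pbar : ℕ → ℝ) (hpbar : ∀ r, pbar r = (1 / n) * ∑ t, p t r)
    (Phat_t : Fin n → ℕ → Ω → ℕ → ℝ)
    (hPhat_t : ∀ t m ω r,
      Phat_t t m ω r = (((Finset.range m).filter (fun k => R t k ω = r)).card : ℝ) / m)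
    (Phat : ℕ → Ω → ℕ → ℝ)
    (hPhat : ∀ m ω r, Phat m ω r = (1 / n) * ∑ t, Phat_t t m ω r) :
    ∀ t, ∀ᵐ ω ∂μ, Tendsto (fun m => ∑' r, -(Phat_t t m ω r) * log (Phat m ω r))
      atTop (nhds (∑' r, -(p t r) * log (pbar r))) := by
  intro t
  obtain rfl : Phat = fun m ω r => (1 / n) * ∑ t, Phat_t t m ω r := by
    funext m ω r; exact hPhat m ω r
  obtain rfl : Phat_t = fun t m ω r => empiricalFreq (R t · ω) m r := by
    funext t m ω r; exact hPhat_t t m ω r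
  obtain rfl : pbar = fun r => (1 / n) * ∑ t, p t r := funext hpbar
  have hpair t : Pairwise fun i j => IndepFun (R t i) (R t j) μ := fun _ _ => (hindep t).indepFun
  have hps : Summable fun r => p t r * -log ((1 / n) * ∑ t, p t r) :=
    summable_mul_neg_log_of_le_mul (Nat.cast_pos.2 t.pos) (hp0 t)
      (fun r => le_mul_mean (hp0 · r) t)
      (fun r => mean_le_one fun t => le_hasSum (hp1 t) r fun r' _ => hp0 t r')
      (hp1 t).summable (hH t)
  filter_upwards [ae_all_iff.2 fun t => ae_all_iff.2 <|
      ae_tendsto_empiricalFreq (hmeas t) (hpair t) (hlaw t) (hp0 t),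
    ae_all_iff.2 fun t => ae_empiricalFreq_eq_zero (hlaw t),
    ae_tendsto_tsum_empiricalFreq_mul (hmeas t) (hpair t) (hlaw t) (hp0 t) hps]
    with ω hfreq hzero hlim
  exact tendsto_tsum_neg_mul_log_mean t (fun t => empiricalFreq_nonneg (R t · ω))
    (fun t => empiricalFreq_le_one (R t · ω)) hp0 (fun t => (hp1 t).summable) hzero hfreq
    (fun m => summable_empiricalFreq_mul _ m _) hps hlim

/-- Key intermediate convergence in the proof of the Theorem: for each fixed `t`,
the empirical cross-entropy `∑ r, -P̂ₜᵐ(r) log P̂ᵐ(r)` converges almost surely to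
the cross-entropy `∑ r, -pₜ(r) log p̄(r)`. -/
theorem plugin_cross_entropy_converges
    {Ω : Type*} [MeasurableSpace Ω] (μ : Measure Ω) [IsProbabilityMeasure μ]
    (n : ℕ) (hn : 1 ≤ n) (p : Fin n → ℕ → ℝ)
    (hp0 : ∀ t r, 0 ≤ p t r) (hp1 : ∀ t, HasSum (p t) 1)
    (hH : ∀ t, Summable (fun r => -(p t r) * log (p t r)))
    (R : Fin n → ℕ → Ω → ℕ) (hmeas : ∀ t k, Measurable (R t k))
    (hindep : ∀ t, iIndepFun (R t) μ)
    (hlaw : ∀ t k r, μ {ω | R t k ω = r} = ENNReal.ofReal (p t r))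
    (pbar : ℕ → ℝ) (hpbar : ∀ r, pbar r = (1 / n) * ∑ t, p t r)
    (Phat_t : Fin n → ℕ → Ω → ℕ → ℝ)
    (hPhat_t : ∀ t m ω r,
      Phat_t t m ω r = (((Finset.range m).filter (fun k => R t k ω = r)).card : ℝ) / m)
    (Phat : ℕ → Ω → ℕ → ℝ)
    (hPhat : ∀ m ω r, Phat m ω r = (1 / n) * ∑ t, Phat_t t m ω r) :
    ∀ t, ∀ᵐ ω ∂μ, Tendsto (fun m => ∑' r, -(Phat_t t m ω r) * log (Phat m ω r))
      atTop (nhds (∑' r, -(p t r) * log (pbar r))) :=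
  plugin_cross_entropy_converges_general μ n p hp0 hp1 hH R hmeas hindep hlaw pbar hpbar Phat_t
    hPhat_t Phat hPhat
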